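/- arXiv:2605.20878 — 2 statements merged into one kernel-verified Lean document; each statement's English description precedes it below -/
import Mathlib

section
/- Let $K_{<t}$ be a positive semidefinite $(t-1)\times(t-1)$ matrix, $\sigma^2 d > 0$, and $\tilde{K}_{<t} = K_{<t} + \sigma^2 d\cdot I_{t-1}$. Suppose $\boldsymbol{\alpha} \in \mathbb{R}^{t-1}$, $\mathbf{k}_{<t} = K_{<t}\boldsymbol{\alpha}$, and $K_{tt} = \boldsymbol{\alpha}^\top K_{<t}\boldsymbol{\alpha}$. Then $\sigma^2 d \le K_{tt} + \sigma^2 d - \mathbf{k}_{<t}^\top \tilde{K}_{<t}^{-1}\mathbf{k}_{<t} \le \sigma^2 d (1 + \|\boldsymbol{\alpha}\|^2)$. -/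
/-!
Write `K̃ = K + s • 1` and `β = K̃⁻¹ α`, so that `α = K β + s β`. Since `K` commutes with `K̃`,
`K̃⁻¹ (K α) = K β`, and symmetry of `K` turns the residual `αᵀ K α - kᵀ K̃⁻¹ k` into
`αᵀ K (α - K β) = s αᵀ K β`. Expanding `α = K β + s β` gives
`αᵀ K β = ‖K β‖² + s βᵀ K β ≥ 0` and `‖α‖² - αᵀ K β = s βᵀ K β + s² ‖β‖² ≥ 0`.
-/

namespace Matrix

variable {n : Type*}

theorem PosSemidef.posDef_add_smul_one [DecidableEq n] {K : Matrix n n ℝ} (hK : K.PosSemidef)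
    {s : ℝ} (hs : 0 < s) : (K + s • (1 : Matrix n n ℝ)).PosDef :=
  PosDef.posSemidef_add hK (PosDef.one.smul hs)

variable [Fintype n]

section CommRing

variable [DecidableEq n] {R : Type*} [CommRing R] {K : Matrix n n R} {s : R} {α β : n → R}

theorem inv_add_smul_one_mulVec_mulVec (hdet : IsUnit (K + s • (1 : Matrix n n R)).det)
    (hα : α = K *ᵥ β + s • β) : (K + s • (1 : Matrix n n R))⁻¹ *ᵥ (K *ᵥ α) = K *ᵥ β := by
  have hKβ : (K + s • (1 : Matrix n n R)) *ᵥ (K *ᵥ β) = K *ᵥ α := by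
    rw [hα, add_mulVec, smul_mulVec, one_mulVec, mulVec_add, mulVec_smul]
  rw [← hKβ, mulVec_mulVec, nonsing_inv_mul _ hdet, one_mulVec]

theorem IsSymm.dotProduct_mulVec_sub_inv_add_smul_one
    (hK : K.IsSymm) (hdet : IsUnit (K + s • (1 : Matrix n n R)).det)
    (hα : α = K *ᵥ β + s • β) :
    α ⬝ᵥ (K *ᵥ α) - (K *ᵥ α) ⬝ᵥ ((K + s • (1 : Matrix n n R))⁻¹ *ᵥ (K *ᵥ α))
      = s * (α ⬝ᵥ (K *ᵥ β)) := by
  have hsymm : (K *ᵥ α) ⬝ᵥ (K *ᵥ β) = α ⬝ᵥ (K *ᵥ (K *ᵥ β)) := by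
    rw [dotProduct_comm, ← dotProduct_transpose_mulVec, hK.eq]
  have hres : α - K *ᵥ β = s • β := by rw [hα]; abel
  rw [inv_add_smul_one_mulVec_mulVec hdet hα, hsymm, ← dotProduct_sub, ← mulVec_sub, hres,
    mulVec_smul, dotProduct_smul, smul_eq_mul]

end CommRing

variable {K : Matrix n n ℝ} {s : ℝ}

theorem PosSemidef.dotProduct_mulVec_add_smul_nonneg (hK : K.PosSemidef) (hs : 0 ≤ s)
    (β : n → ℝ) : 0 ≤ (K *ᵥ β + s • β) ⬝ᵥ (K *ᵥ β) := by
  rw [add_dotProduct, smul_dotProduct, smul_eq_mul]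
  have hβ := hK.dotProduct_mulVec_nonneg β
  rw [star_trivial] at hβ
  have hKβ := dotProduct_self_star_nonneg (K *ᵥ β)
  rw [star_trivial] at hKβ
  positivity

theorem PosSemidef.dotProduct_mulVec_add_smul_le (hK : K.PosSemidef) (hs : 0 ≤ s)
    (β : n → ℝ) :
    (K *ᵥ β + s • β) ⬝ᵥ (K *ᵥ β) ≤ (K *ᵥ β + s • β) ⬝ᵥ (K *ᵥ β + s • β) := by
  have hβ := hK.dotProduct_mulVec_nonneg β
  rw [star_trivial] at hβ
  have hββ := dotProduct_self_star_nonneg β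
  rw [star_trivial] at hββ
  have hgap : (K *ᵥ β + s • β) ⬝ᵥ (K *ᵥ β + s • β) - (K *ᵥ β + s • β) ⬝ᵥ (K *ᵥ β)
      = s * (β ⬝ᵥ (K *ᵥ β)) + s ^ 2 * (β ⬝ᵥ β) := by
    rw [← dotProduct_sub, add_sub_cancel_left, dotProduct_smul, add_dotProduct, smul_dotProduct,
      dotProduct_comm (K *ᵥ β), smul_eq_mul, smul_eq_mul]
    ring
  linarith [mul_nonneg hs hβ, mul_nonneg (sq_nonneg s) hββ]

end Matrix

open Matrix BigOperators

/-- Here `m = t - 1` is the prefix length and `s = σ² d`. -/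
theorem stmt_8 (m : ℕ) (Kpre : Matrix (Fin m) (Fin m) ℝ) (hKpre : Kpre.PosSemidef)
    (s : ℝ) (hs : 0 < s)
    (α : Fin m → ℝ) (k : Fin m → ℝ) (hk : k = Kpre.mulVec α)
    (Ktt : ℝ) (hKtt : Ktt = dotProduct α (Kpre.mulVec α))
    (Ktilde : Matrix (Fin m) (Fin m) ℝ)
    (hKtilde : Ktilde = Kpre + s • (1 : Matrix (Fin m) (Fin m) ℝ)) :
    s ≤ Ktt + s - dotProduct k (Ktilde⁻¹.mulVec k) ∧
      Ktt + s - dotProduct k (Ktilde⁻¹.mulVec k) ≤ s * (1 + ∑ i, (α i) ^ 2) := by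
  subst hk hKtt hKtilde
  have hdet : IsUnit (Kpre + s • (1 : Matrix (Fin m) (Fin m) ℝ)).det :=
    (isUnit_iff_isUnit_det _).mp (hKpre.posDef_add_smul_one hs).isUnit
  set β := (Kpre + s • (1 : Matrix (Fin m) (Fin m) ℝ))⁻¹ *ᵥ α
  have hα : α = Kpre *ᵥ β + s • β := by
    have hKβ : (Kpre + s • (1 : Matrix (Fin m) (Fin m) ℝ)) *ᵥ β = α := by
      rw [mulVec_mulVec, mul_nonsing_inv _ hdet, one_mulVec]
    rw [add_mulVec, smul_mulVec, one_mulVec] at hKβ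
    exact hKβ.symm
  have hresidual :=
    (isHermitian_iff_isSymm.mp hKpre.isHermitian).dotProduct_mulVec_sub_inv_add_smul_one hdet hα
  have hnonneg := hKpre.dotProduct_mulVec_add_smul_nonneg hs.le β
  have hle := hKpre.dotProduct_mulVec_add_smul_le hs.le β
  rw [← hα] at hnonneg hle
  have hnorm : ∑ i, α i ^ 2 = α ⬝ᵥ α := by simp only [dotProduct, sq]
  rw [hnorm]
  exact ⟨by linarith [mul_nonneg hs.le hnonneg],
    by linarith [mul_le_mul_of_nonneg_left hle hs.le]⟩
end

section
/- Under the hypotheses of the frontier-inactivity bound, with $r_t^{\mathrm{diag}} = \log(K_{tt} + \sigma^2 d)$ and $r_t = \log(K_{tt} + \sigma^2 d - \mathbf{k}_{<t}^\top \tilde{K}_{<t}^{-1}\mathbf{k}_{<t})$, if $(t-1)\epsilon^2 < 1$ then $0 \le r_t^{\mathrm{diag}} - r_t \le -\log(1 - (t-1)\epsilon^2)$. -/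
/-!
Write `q = k ⬝ᵥ K̃⁻¹ *ᵥ k` with `K̃ = K_{<t} + s • 1`. Since `K_{<t}` is positive semidefinite,
`K̃ ≥ s • 1`, hence `0 ≤ s * q ≤ ‖k‖²`. Each entry of `k` is an off-diagonal entry of `K`, so
`k_j² ≤ K_jj K_tt ≤ (ε s)²` by the 2 × 2 minors, giving `q ≤ t ε² s ≤ t ε² (K_tt + s)`.
Taking logarithms of `K_tt + s - q ≥ (1 - t ε²) (K_tt + s)` gives both bounds.
-/

open Matrix

namespace Matrix.PosSemidef

variable {n : Type*} {A : Matrix n n ℝ}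

theorem sq_apply_le_mul_diag (hA : A.PosSemidef) (i j : n) : A i j ^ 2 ≤ A i i * A j j := by
  have hdet := (hA.submatrix ![i, j]).det_nonneg
  rw [det_fin_two] at hdet
  have hsymm : A j i = A i j := by simpa using hA.1.apply i j
  simp only [submatrix_apply, Matrix.cons_val_zero, Matrix.cons_val_one, hsymm] at hdet
  nlinarith

theorem sq_apply_le_of_diag_le (hA : A.PosSemidef) {c : ℝ} (hc : ∀ i, A i i ≤ c) (i j : n) :
    A i j ^ 2 ≤ c ^ 2 :=
  (hA.sq_apply_le_mul_diag i j).trans <|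
    by nlinarith [hc i, hc j, hA.diag_nonneg (i := i), hA.diag_nonneg (i := j)]

variable [Fintype n] [DecidableEq n]

theorem dotProduct_inv_add_smul_one_mulVec_nonneg (hA : A.PosSemidef) {s : ℝ} (hs : 0 < s)
    (k : n → ℝ) : 0 ≤ k ⬝ᵥ (A + s • 1)⁻¹ *ᵥ k := by
  have hM : (A + s • 1).PosDef := PosDef.posSemidef_add hA (PosDef.one.smul hs)
  simpa using hM.inv.posSemidef.dotProduct_mulVec_nonneg k

/-- With `y = (A + s • 1)⁻¹ *ᵥ k` we have `k = A *ᵥ y + s • y`, so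
`k ⬝ᵥ k - s * (k ⬝ᵥ y) = k ⬝ᵥ A *ᵥ y = ‖A *ᵥ y‖² + s * (y ⬝ᵥ A *ᵥ y) ≥ 0`. -/
theorem mul_dotProduct_inv_add_smul_one_mulVec_le (hA : A.PosSemidef) {s : ℝ} (hs : 0 < s)
    (k : n → ℝ) : s * (k ⬝ᵥ (A + s • 1)⁻¹ *ᵥ k) ≤ k ⬝ᵥ k := by
  set y := (A + s • 1)⁻¹ *ᵥ k
  have hM : (A + s • 1).PosDef := PosDef.posSemidef_add hA (PosDef.one.smul hs)
  have hk : k = A *ᵥ y + s • y :=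
    calc k = (A + s • 1) *ᵥ y := by
          rw [mulVec_mulVec, mul_nonsing_inv _ hM.det_pos.ne'.isUnit, one_mulVec]
      _ = A *ᵥ y + s • y := by rw [add_mulVec, smul_mulVec, one_mulVec]
  have hAy : 0 ≤ k ⬝ᵥ A *ᵥ y := by
    rw [hk, add_dotProduct, smul_dotProduct, smul_eq_mul]
    have hAy_sq : 0 ≤ A *ᵥ y ⬝ᵥ A *ᵥ y := by simpa using dotProduct_star_self_nonneg (A *ᵥ y)
    have hyAy : 0 ≤ y ⬝ᵥ A *ᵥ y := by simpa using hA.dotProduct_mulVec_nonneg y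
    positivity
  calc s * (k ⬝ᵥ y) ≤ k ⬝ᵥ A *ᵥ y + s * (k ⬝ᵥ y) := le_add_of_nonneg_left hAy
    _ = k ⬝ᵥ (A *ᵥ y + s • y) := by rw [dotProduct_add, dotProduct_smul, smul_eq_mul]
    _ = k ⬝ᵥ k := by rw [← hk]

end Matrix.PosSemidef

theorem Matrix.dotProduct_self_le_card_mul {n : Type*} [Fintype n] {v : n → ℝ} {c : ℝ}
    (hv : ∀ j, v j ^ 2 ≤ c) : v ⬝ᵥ v ≤ Fintype.card n * c := by
  simpa [dotProduct, ← sq] using Finset.sum_le_card_nsmul Finset.univ _ c fun j _ => hv j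

theorem Real.log_sub_log_sub_mem_Icc {A q δ : ℝ} (hA : 0 < A) (hq₀ : 0 ≤ q) (hq : q ≤ δ * A)
    (hδ : δ < 1) : Real.log A - Real.log (A - q) ∈ Set.Icc 0 (-Real.log (1 - δ)) := by
  have hδA : 0 < (1 - δ) * A := mul_pos (sub_pos.mpr hδ) hA
  have hlog : Real.log ((1 - δ) * A) ≤ Real.log (A - q) := Real.log_le_log hδA (by linarith)
  rw [Real.log_mul (sub_pos.mpr hδ).ne' hA.ne'] at hlog
  exact ⟨sub_nonneg.mpr (Real.log_le_log (by linarith) (by linarith)), by linarith⟩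

/-- Indices are 0-based: `(t : ℕ)` is the paper's `t - 1`. -/
theorem stmt_13 (T : ℕ) (K : Matrix (Fin T) (Fin T) ℝ) (hK : K.PosSemidef)
    (s : ℝ) (hs : 0 < s)
    (ε : ℝ) (hε : IsGreatest (Set.range fun i : Fin T => K i i / s) ε)
    (t : Fin T)
    (Ktilde : Matrix (Fin (t : ℕ)) (Fin (t : ℕ)) ℝ)
    (hKtilde : Ktilde = fun i j =>
      (K + s • (1 : Matrix (Fin T) (Fin T) ℝ)) (i.castLE t.isLt.le) (j.castLE t.isLt.le))
    (k : Fin (t : ℕ) → ℝ) (hk : k = fun j => K (j.castLE t.isLt.le) t)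
    (hsmall : ((t : ℕ) : ℝ) * ε ^ 2 < 1)
    (rdiag r : ℝ)
    (hrdiag : rdiag = Real.log (K t t + s))
    (hr : r = Real.log (K t t + s - dotProduct k (Ktilde⁻¹.mulVec k))) :
    0 ≤ rdiag - r ∧ rdiag - r ≤ -Real.log (1 - ((t : ℕ) : ℝ) * ε ^ 2) := by
  set f : Fin (t : ℕ) → Fin T := Fin.castLE t.isLt.le
  have hdiag_le (i : Fin T) : K i i ≤ ε * s := (div_le_iff₀ hs).mp (hε.2 ⟨i, rfl⟩)
  have hKtilde' : Ktilde = K.submatrix f f + s • 1 := by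
    subst hKtilde
    ext i j
    simp [f, one_apply, Fin.castLE_inj]
  have hq₀ : 0 ≤ k ⬝ᵥ Ktilde⁻¹ *ᵥ k :=
    hKtilde' ▸ (hK.submatrix f).dotProduct_inv_add_smul_one_mulVec_nonneg hs k
  have hkk : k ⬝ᵥ k ≤ (t : ℕ) * (ε * s) ^ 2 := by
    have := dotProduct_self_le_card_mul (v := k) fun j => by
      rw [hk]
      exact hK.sq_apply_le_of_diag_le hdiag_le (f j) t
    simpa using this
  have hsq : s * (k ⬝ᵥ Ktilde⁻¹ *ᵥ k) ≤ k ⬝ᵥ k :=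
    hKtilde' ▸ (hK.submatrix f).mul_dotProduct_inv_add_smul_one_mulVec_le hs k
  have hq : k ⬝ᵥ Ktilde⁻¹ *ᵥ k ≤ (t : ℕ) * ε ^ 2 * (K t t + s) :=
    calc k ⬝ᵥ Ktilde⁻¹ *ᵥ k ≤ (t : ℕ) * ε ^ 2 * s :=
          le_of_mul_le_mul_left (by linarith) hs
      _ ≤ (t : ℕ) * ε ^ 2 * (K t t + s) := by gcongr; linarith [hK.diag_nonneg (i := t)]
  subst hrdiag hr
  exact Real.log_sub_log_sub_mem_Icc (by linarith [hK.diag_nonneg (i := t)]) hq₀ hq hsmall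
end
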